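/- For every z ∈ ℂ^×, the homomorphism L̂ : P̂(ℂ) → ℂ/4π²ℤ satisfies L̂(χ̂(z)) = 2πi·Log z in ℂ/4π²ℤ. -/

import Mathlib

open Complex Filter Set
open scoped Real TensorProduct

attribute [local instance] Classical.propDecidable

noncomputable section

/-- The dilogarithm `Li₂`, defined by the integral formula
`Li₂(z) = -∫₀¹ Log(1 - z t)/t dt` (the analytic continuation on `ℂ ∖ [1,∞)` of
`∑_{k≥1} z^k/k²`). -/
def Li2 (z : ℂ) : ℂ := -∫ t in (0:ℝ)..1, Complex.log (1 - z * t) / t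

/-- The cut plane `C_cut = ℂ ∖ ((-∞,0] ∪ [1,∞))`. -/
def Ccut : Set ℂ := {z : ℂ | z.im ≠ 0 ∨ (0 < z.re ∧ z.re < 1)}

lemma ne_zero_of_mem_Ccut {z : ℂ} (h : z ∈ Ccut) : z ≠ 0 := by
  rintro rfl; simp [Ccut] at h

lemma ne_one_of_mem_Ccut {z : ℂ} (h : z ∈ Ccut) : z ≠ 1 := by
  rintro rfl; simp [Ccut] at h

lemma half_mem_Ccut : (1/2 : ℂ) ∈ Ccut := by
  refine Or.inr ?_
  norm_num [Ccut, Complex.div_re]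

lemma mem_Ccut_of_im_ne {z : ℂ} (h : z.im ≠ 0) : z ∈ Ccut := Or.inl h

lemma mem_Ccut_of_im_pos {z : ℂ} (h : 0 < z.im) : z ∈ Ccut := Or.inl (ne_of_gt h)

/-- `C̄_cut`: the cut plane together with two boundary points `x ± 0i` for each
`x ∈ (-∞,0) ∪ (1,∞)`. -/
inductive CCutBar : Type
  | int : (z : ℂ) → z ∈ Ccut → CCutBar
  | up : (x : ℝ) → (x < 0 ∨ 1 < x) → CCutBar
  | dn : (x : ℝ) → (x < 0 ∨ 1 < x) → CCutBar

namespace CCutBar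

/-- The underlying complex number. -/
def toC : CCutBar → ℂ
  | int z _ => z
  | up x _ => x
  | dn x _ => x

/-- The principal logarithm `Log`, extended to `C̄_cut` by its one-sided limits. -/
def log : CCutBar → ℂ
  | int z _ => Complex.log z
  | up x _ => Complex.log x
  | dn x _ => if x < 0 then (Real.log (-x) : ℂ) - Real.pi * Complex.I else Complex.log x

/-- `Log(1 - z)`, extended to `C̄_cut` by its one-sided limits. -/
def log1sub : CCutBar → ℂ
  | int z _ => Complex.log (1 - z)
  | up x _ => if 1 < x then (Real.log (x - 1) : ℂ) - Real.pi * Complex.I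
      else Complex.log (1 - (x : ℂ))
  | dn x _ => Complex.log (1 - (x : ℂ))

/-- `Li₂`, extended to `C̄_cut` by its one-sided limits. -/
def li2 : CCutBar → ℂ
  | int z _ => Li2 z
  | up x _ => if 1 < x then Li2 x + 2 * Real.pi * Complex.I * Real.log x else Li2 x
  | dn x _ => Li2 x

/-- `Arg = Im Log`, extended to `C̄_cut`. -/
def arg (z : CCutBar) : ℝ := z.log.im

lemma toC_ne_zero : ∀ z : CCutBar, z.toC ≠ 0
  | int z hz => ne_zero_of_mem_Ccut hz
  | up x hx => by
      show (x:ℂ) ≠ 0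
      exact_mod_cast (by rcases hx with hx | hx <;> intro h <;> rw [h] at hx <;> linarith : x ≠ 0)
  | dn x hx => by
      show (x:ℂ) ≠ 0
      exact_mod_cast (by rcases hx with hx | hx <;> intro h <;> rw [h] at hx <;> linarith : x ≠ 0)

lemma toC_ne_one : ∀ z : CCutBar, z.toC ≠ 1
  | int z hz => ne_one_of_mem_Ccut hz
  | up x hx => by
      show (x:ℂ) ≠ 1
      exact_mod_cast (by rcases hx with hx | hx <;> intro h <;> rw [h] at hx <;> linarith : x ≠ 1)
  | dn x hx => by
      show (x:ℂ) ≠ 1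
      exact_mod_cast (by rcases hx with hx | hx <;> intro h <;> rw [h] at hx <;> linarith : x ≠ 1)

lemma exp_log : ∀ z : CCutBar, Complex.exp z.log = z.toC
  | int z hz => Complex.exp_log (ne_zero_of_mem_Ccut hz)
  | up x hx => Complex.exp_log (toC_ne_zero (up x hx))
  | dn x hx => by
      show Complex.exp (if x < 0 then (Real.log (-x) : ℂ) - Real.pi * Complex.I
        else Complex.log x) = (x : ℂ)
      split_ifs with h
      · rw [Complex.exp_sub, Complex.exp_pi_mul_I, ← Complex.ofReal_exp,
          Real.exp_log (by linarith : (0:ℝ) < -x)]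
        push_cast; ring
      · exact Complex.exp_log (toC_ne_zero (dn x hx))

lemma exp_log1sub : ∀ z : CCutBar, Complex.exp z.log1sub = 1 - z.toC
  | int z hz => Complex.exp_log (sub_ne_zero.mpr (Ne.symm (ne_one_of_mem_Ccut hz)))
  | up x hx => by
      show Complex.exp (if 1 < x then (Real.log (x - 1) : ℂ) - Real.pi * Complex.I
        else Complex.log (1 - (x:ℂ))) = 1 - (x : ℂ)
      split_ifs with h
      · rw [Complex.exp_sub, Complex.exp_pi_mul_I, ← Complex.ofReal_exp,
          Real.exp_log (by linarith : (0:ℝ) < x - 1)]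
        push_cast; ring
      · refine Complex.exp_log ?_
        have hx' : x < 0 := by rcases hx with h' | h'; exact h'; exact absurd h' h
        rw [show (1 : ℂ) - (x:ℂ) = ((1 - x : ℝ) : ℂ) by push_cast; ring]
        exact_mod_cast (by linarith : (1 - x : ℝ) ≠ 0)
  | dn x hx => by
      refine Complex.exp_log ?_
      rw [show (1 : ℂ) - (x:ℂ) = ((1 - x : ℝ) : ℂ) by push_cast; ring]
      rcases hx with h' | h' <;>
        exact_mod_cast (by intro h; linarith [sub_eq_zero.mp h] : (1 - x : ℝ) ≠ 0)

end CCutBar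

/-- `Ĉ`, the universal abelian cover of `ℂ ∖ {0,1}` (the quotient of `C̄_cut × (2ℤ)²` by
the identifications `(x+0i,2p,2q) ∼ (x−0i,2p+2,2q)` for `x ∈ (−∞,0)` and
`(x+0i,2p,2q) ∼ (x−0i,2p,2q+2)` for `x ∈ (1,∞)`), realized concretely as
`{(w₁,w₂) ∈ ℂ² : e^{w₁} + e^{-w₂} = 1}`, the class of `(z;2p,2q)` corresponding to
`(Log z + 2πi p, -Log(1−z) + 2πi q)`. -/
def Chat : Type := {w : ℂ × ℂ // Complex.exp w.1 + Complex.exp (-w.2) = 1}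

instance : TopologicalSpace Chat := instTopologicalSpaceSubtype

/-- The covering projection `π̂ : Ĉ → ℂ ∖ {0,1}`. -/
def Chat.proj (c : Chat) : ℂ := Complex.exp c.val.1

/-- The point of `Ĉ` written `(z; 2p, 2q)` for `z ∈ C̄_cut`. -/
def Chat.gen (z : CCutBar) (p q : ℤ) : Chat :=
  ⟨(z.log + 2 * Real.pi * Complex.I * p, -z.log1sub + 2 * Real.pi * Complex.I * q), by
    have h1 : Complex.exp (z.log + 2 * Real.pi * Complex.I * p) = z.toC := by
      rw [Complex.exp_add, CCutBar.exp_log,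
        show (2 * (Real.pi:ℂ) * Complex.I * p) = (p : ℂ) * (2 * Real.pi * Complex.I) by ring]
      rw [show ((p:ℂ) * (2 * Real.pi * Complex.I)) = ((p:ℤ):ℂ) * (2 * Real.pi * Complex.I) by
        norm_num]
      rw [Complex.exp_int_mul_two_pi_mul_I, mul_one]
    have h2 : Complex.exp (-(-z.log1sub + 2 * Real.pi * Complex.I * q)) = 1 - z.toC := by
      rw [show (-(-z.log1sub + 2 * (Real.pi:ℂ) * Complex.I * q))
            = z.log1sub + ((-q : ℤ) : ℂ) * (2 * Real.pi * Complex.I) by push_cast; ring,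
        Complex.exp_add, CCutBar.exp_log1sub, Complex.exp_int_mul_two_pi_mul_I, mul_one]
    rw [h1, h2]; ring⟩

/-- The set `FT` of five term relations. -/
def FT : Set (ℂ × ℂ × ℂ × ℂ × ℂ) :=
  {v | ∃ x y : ℂ, x ≠ 0 ∧ x ≠ 1 ∧ y ≠ 0 ∧ y ≠ 1 ∧ x ≠ y ∧
    v = (x, y, y / x, (1 - 1/x) / (1 - 1/y), (1 - x) / (1 - y))}

/-- `FT⁺ ⊆ FT`: all five coordinates have positive imaginary part. -/
def FTplus : Set (ℂ × ℂ × ℂ × ℂ × ℂ) :=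
  {v | v ∈ FT ∧ 0 < v.1.im ∧ 0 < v.2.1.im ∧ 0 < v.2.2.1.im ∧ 0 < v.2.2.2.1.im
    ∧ 0 < v.2.2.2.2.im}

/-- Coordinatewise projection `Ĉ⁵ → ℂ⁵`. -/
def Chat5proj (v : Chat × Chat × Chat × Chat × Chat) : ℂ × ℂ × ℂ × ℂ × ℂ :=
  (v.1.proj, v.2.1.proj, v.2.2.1.proj, v.2.2.2.1.proj, v.2.2.2.2.proj)

/-- `π̂⁻¹(FT) ⊆ Ĉ⁵`. -/
def preFT : Set (Chat × Chat × Chat × Chat × Chat) := {v | Chat5proj v ∈ FT}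

/-- `F̂T⁺`: the lifts `((z₀;0,0),…,(z₄;0,0))` of tuples in `FT⁺`. -/
def FThatPlus : Set (Chat × Chat × Chat × Chat × Chat) :=
  {v | ∃ (z₀ z₁ z₂ z₃ z₄ : ℂ) (h₀ : 0 < z₀.im) (h₁ : 0 < z₁.im) (h₂ : 0 < z₂.im)
      (h₃ : 0 < z₃.im) (h₄ : 0 < z₄.im),
    (z₀, z₁, z₂, z₃, z₄) ∈ FT ∧
    v = (Chat.gen (.int z₀ (mem_Ccut_of_im_pos h₀)) 0 0,
         Chat.gen (.int z₁ (mem_Ccut_of_im_pos h₁)) 0 0,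
         Chat.gen (.int z₂ (mem_Ccut_of_im_pos h₂)) 0 0,
         Chat.gen (.int z₃ (mem_Ccut_of_im_pos h₃)) 0 0,
         Chat.gen (.int z₄ (mem_Ccut_of_im_pos h₄)) 0 0)}

/-- `F̂T`: the connected component of `π̂⁻¹(FT) ⊆ Ĉ⁵` containing `F̂T⁺`. -/
def FThat : Set (Chat × Chat × Chat × Chat × Chat) :=
  ⋃ v ∈ FThatPlus, connectedComponentIn preFT v

/-- The five term elements of `ℤ[Ĉ]`. -/
def fiveTermSet : Set (FreeAbelianGroup Chat) :=
  {a | ∃ v ∈ FThat, a = FreeAbelianGroup.of v.1 - FreeAbelianGroup.of v.2.1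
      + FreeAbelianGroup.of v.2.2.1 - FreeAbelianGroup.of v.2.2.2.1
      + FreeAbelianGroup.of v.2.2.2.2}

/-- The subgroup of `ℤ[Ĉ]` generated by the five term relations, i.e. `im ρ̂`. -/
def fiveTermSubgroup : AddSubgroup (FreeAbelianGroup Chat) := AddSubgroup.closure fiveTermSet

/-- The extended pre-Bloch group `P̂(ℂ) = ℤ[Ĉ]/im ρ̂`. -/
abbrev PreBloch : Type := FreeAbelianGroup Chat ⧸ fiveTermSubgroup

/-- The quotient map `ℤ[Ĉ] → P̂(ℂ)`. -/
def toPB : FreeAbelianGroup Chat →+ PreBloch := QuotientAddGroup.mk' _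

/-- The class `[z;2p,2q] ∈ P̂(ℂ)`. -/
def PB (z : CCutBar) (p q : ℤ) : PreBloch := toPB (FreeAbelianGroup.of (Chat.gen z p q))

/-- `{z;2p} := [z;2p,2q] − [z;2p,2(q−1)] ∈ P̂(ℂ)` (independent of `q`; taken at `q = 0`). -/
def brace (z : CCutBar) (p : ℤ) : PreBloch := PB z p 0 - PB z p (-1)

/-- `κ̂ := {z;2p} − {z;2(p−1)} ∈ P̂(ℂ)` (independent of `z` and `p`;
taken at `z = 1/2`, `p = 1`). -/
def kappaHat : PreBloch :=
  brace (.int (1/2) half_mem_Ccut) 1 - brace (.int (1/2) half_mem_Ccut) 0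

/-- The point `w + 0i` of `C̄_cut` over `w ∈ ℂ ∖ {0,1}`: `w` itself if `w ∈ C_cut`,
and the upper boundary point if `w ∈ (-∞,0) ∪ (1,∞)` (junk value if `w ∈ {0,1}`). -/
def upperPt (w : ℂ) : CCutBar :=
  if h : w ∈ Ccut then .int w h
  else if h2 : w.re < 0 ∨ 1 < w.re then .up w.re h2
  else .int (1/2) half_mem_Ccut

/-- The map `χ̂ : ℂ^× → P̂(ℂ)` (junk value at `z = 0`). -/
def chiHat (z : ℂ) : PreBloch :=
  if z = 1 then 0
  else if z = -1 then kappaHat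
  else if -Real.pi/2 < Complex.arg z ∧ Complex.arg z ≤ Real.pi/2 then brace (upperPt (z^2)) 0
  else brace (upperPt (z^2)) 1

/-- `ℂ/4π²ℤ = ℂ/ℤ(2)`. -/
abbrev Mod4pi2 : Type := ℂ ⧸ AddSubgroup.zmultiples ((4 : ℂ) * (Real.pi : ℂ)^2)

/-- The quotient map `ℂ → ℂ/4π²ℤ`. -/
def mk4 : ℂ →+ Mod4pi2 := QuotientAddGroup.mk' _

/-- The extended Rogers dilogarithm
`L̄(z;2p,2q) = Li₂(z) + ½(Log z + 2πi p)(Log(1−z) + 2πi q) − π²/6` on `C̄_cut × (2ℤ)²`. -/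
def Lbar (z : CCutBar) (p q : ℤ) : ℂ :=
  z.li2 + (1/2) * (z.log + 2 * Real.pi * Complex.I * p) * (z.log1sub + 2 * Real.pi * Complex.I * q)
    - (Real.pi : ℂ)^2 / 6

/-- `ℂ ∖ {0,1}` as a type. -/
def CStar01 : Type := {z : ℂ // z ≠ 0 ∧ z ≠ 1}

/-- The five term elements of `ℤ[ℂ ∖ {0,1}]`. -/
def fiveTermSetCl : Set (FreeAbelianGroup CStar01) :=
  {a | ∃ z₀ z₁ z₂ z₃ z₄ : CStar01, (z₀.val, z₁.val, z₂.val, z₃.val, z₄.val) ∈ FT ∧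
    a = FreeAbelianGroup.of z₀ - FreeAbelianGroup.of z₁ + FreeAbelianGroup.of z₂
      - FreeAbelianGroup.of z₃ + FreeAbelianGroup.of z₄}

/-- The subgroup of classical five term relations, i.e. `im ρ`. -/
def fiveTermSubgroupCl : AddSubgroup (FreeAbelianGroup CStar01) :=
  AddSubgroup.closure fiveTermSetCl

/-- The classical pre-Bloch group `P(ℂ)`. -/
abbrev PreBlochCl : Type := FreeAbelianGroup CStar01 ⧸ fiveTermSubgroupCl

/-- The quotient map `ℤ[ℂ ∖ {0,1}] → P(ℂ)`. -/
def toPBcl : FreeAbelianGroup CStar01 →+ PreBlochCl := QuotientAddGroup.mk' _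

/-- `π̂` with target `ℂ ∖ {0,1}`. -/
def Chat.proj01 (c : Chat) : CStar01 :=
  ⟨Complex.exp c.val.1, Complex.exp_ne_zero _, by
    intro h
    have hc := c.prop
    rw [h] at hc
    have h0 : Complex.exp (-c.val.2) = 0 := by linear_combination hc
    exact Complex.exp_ne_zero _ h0⟩

lemma fiveTerm_maps (v : Chat × Chat × Chat × Chat × Chat) (hv : v ∈ FThat) :
    (v.1.proj01.val, v.2.1.proj01.val, v.2.2.1.proj01.val, v.2.2.2.1.proj01.val,
      v.2.2.2.2.proj01.val) ∈ FT := by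
  have hv' : v ∈ preFT := by
    rcases mem_iUnion₂.mp hv with ⟨w, hw, hvw⟩
    exact connectedComponentIn_subset preFT w hvw
  exact hv'

/-- The homomorphism `P̂(ℂ) → P(ℂ)` induced by `π̂`. -/
def projPB : PreBloch →+ PreBlochCl :=
  QuotientAddGroup.lift fiveTermSubgroup
    (toPBcl.comp (FreeAbelianGroup.lift (fun c => FreeAbelianGroup.of c.proj01)))
    (by
      rw [show fiveTermSubgroup = AddSubgroup.closure fiveTermSet from rfl,
        AddSubgroup.closure_le]
      rintro a ⟨v, hv, rfl⟩
      have hmem : (FreeAbelianGroup.of v.1.proj01 - FreeAbelianGroup.of v.2.1.proj01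
          + FreeAbelianGroup.of v.2.2.1.proj01 - FreeAbelianGroup.of v.2.2.2.1.proj01
          + FreeAbelianGroup.of v.2.2.2.2.proj01) ∈ fiveTermSubgroupCl :=
        AddSubgroup.subset_closure
          ⟨v.1.proj01, v.2.1.proj01, v.2.2.1.proj01, v.2.2.2.1.proj01, v.2.2.2.2.proj01,
            fiveTerm_maps v hv, rfl⟩
      rw [SetLike.mem_coe, AddMonoidHom.mem_ker, AddMonoidHom.comp_apply]
      have hlift : (FreeAbelianGroup.lift (fun c : Chat => FreeAbelianGroup.of c.proj01))
          (FreeAbelianGroup.of v.1 - FreeAbelianGroup.of v.2.1 + FreeAbelianGroup.of v.2.2.1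
            - FreeAbelianGroup.of v.2.2.2.1 + FreeAbelianGroup.of v.2.2.2.2)
          = FreeAbelianGroup.of v.1.proj01 - FreeAbelianGroup.of v.2.1.proj01
            + FreeAbelianGroup.of v.2.2.1.proj01 - FreeAbelianGroup.of v.2.2.2.1.proj01
            + FreeAbelianGroup.of v.2.2.2.2.proj01 := by
        simp [FreeAbelianGroup.lift_apply_of]
      rw [hlift]
      exact (QuotientAddGroup.eq_zero_iff _).mpr hmem)

/-- The span of the squares, defining the wedge `ℂ ∧_ℤ ℂ`. -/
def wedgeSpan : Submodule ℤ (ℂ ⊗[ℤ] ℂ) := Submodule.span ℤ {x | ∃ a : ℂ, x = a ⊗ₜ[ℤ] a}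

/-- The wedge `ℂ ∧_ℤ ℂ`. -/
abbrev WedgeC : Type := (ℂ ⊗[ℤ] ℂ) ⧸ wedgeSpan

/-- `a ∧ b ∈ ℂ ∧_ℤ ℂ`. -/
def wedgeMkC (a b : ℂ) : WedgeC := Submodule.Quotient.mk (a ⊗ₜ[ℤ] b)

/-- `ν̂ : ℤ[Ĉ] → ℂ ∧_ℤ ℂ`, `[z;2p,2q] ↦ (Log z + 2πi p) ∧ (−Log(1−z) + 2πi q)`. -/
def nuHat0 : FreeAbelianGroup Chat →+ WedgeC :=
  FreeAbelianGroup.lift (fun c => wedgeMkC c.val.1 c.val.2)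

/-- The extended Bloch group `B̂(ℂ) ⊆ P̂(ℂ)`: the kernel of the homomorphism
`P̂(ℂ) → ℂ ∧_ℤ ℂ` induced by `ν̂`. -/
def BlochHat : AddSubgroup PreBloch := (nuHat0.ker).map toPB

/-- `ℂˣ`, written additively. -/
abbrev AUnits : Type := Additive ℂˣ

/-- The span of the squares, defining the wedge `ℂ^× ∧_ℤ ℂ^×`. -/
def wedgeSpanU : Submodule ℤ (AUnits ⊗[ℤ] AUnits) :=
  Submodule.span ℤ {x | ∃ a : AUnits, x = a ⊗ₜ[ℤ] a}

/-- The wedge `ℂ^× ∧_ℤ ℂ^×`. -/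
abbrev WedgeU : Type := (AUnits ⊗[ℤ] AUnits) ⧸ wedgeSpanU

/-- `a ∧ b ∈ ℂ^× ∧_ℤ ℂ^×`. -/
def wedgeMkU (a b : AUnits) : WedgeU := Submodule.Quotient.mk (a ⊗ₜ[ℤ] b)

/-- `z` as a unit. -/
def CStar01.unit (z : CStar01) : ℂˣ := Units.mk0 z.val z.prop.1

/-- `1 - z` as a unit. -/
def CStar01.oneSubUnit (z : CStar01) : ℂˣ :=
  Units.mk0 (1 - z.val) (sub_ne_zero.mpr (Ne.symm z.prop.2))

/-- `ν : ℤ[ℂ∖{0,1}] → ℂ^× ∧_ℤ ℂ^×`, `[z] ↦ z ∧ (1−z)⁻¹`. -/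
def nuCl0 : FreeAbelianGroup CStar01 →+ WedgeU :=
  FreeAbelianGroup.lift
    (fun z => wedgeMkU (Additive.ofMul z.unit) (Additive.ofMul (z.oneSubUnit)⁻¹))

/-- The classical Bloch group `B(ℂ) ⊆ P(ℂ)`: the kernel of the homomorphism
`P(ℂ) → ℂ^× ∧_ℤ ℂ^×` induced by `ν`. -/
def BlochCl : AddSubgroup PreBlochCl := (nuCl0.ker).map toPBcl

/-- The principal fourth root `⁴√z`, with `Arg ⁴√z ∈ (−π/4, π/4]`. -/
def qroot (z : ℂ) : ℂ := Complex.exp (Complex.log z / 4)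

lemma one_sub_mem_Ccut {z : ℂ} (h : z ∈ Ccut) : 1 - z ∈ Ccut := by
  rcases h with h | h
  · apply mem_Ccut_of_im_ne
    rw [Complex.sub_im, Complex.one_im, zero_sub, neg_ne_zero]; exact h
  · refine Or.inr ⟨?_, ?_⟩ <;> rw [Complex.sub_re, Complex.one_re] <;> linarith [h.1, h.2]

lemma ne_zero_of_im_pos {z : ℂ} (h : 0 < z.im) : z ≠ 0 := by
  intro h0; rw [h0] at h; simp at h

lemma one_sub_mem_of_im_pos {z : ℂ} (h : 0 < z.im) : 1 - z ∈ Ccut := by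
  apply mem_Ccut_of_im_ne
  rw [Complex.sub_im, Complex.one_im, zero_sub, neg_ne_zero]
  exact ne_of_gt h

lemma inv_mem_Ccut {z : ℂ} (h : 0 < z.im) : 1 / z ∈ Ccut := by
  apply mem_Ccut_of_im_ne
  rw [one_div, Complex.inv_im]
  have hN : 0 < Complex.normSq z := Complex.normSq_pos.mpr (ne_zero_of_im_pos h)
  exact ne_of_lt (div_neg_of_neg_of_pos (neg_lt_zero.mpr h) hN)

lemma one_sub_inv_mem_Ccut {z : ℂ} (h : 0 < z.im) : 1 - 1 / z ∈ Ccut := by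
  apply mem_Ccut_of_im_ne
  have hN : 0 < Complex.normSq z := Complex.normSq_pos.mpr (ne_zero_of_im_pos h)
  have h1 : (1 - 1 / z).im = z.im / Complex.normSq z := by
    rw [Complex.sub_im, Complex.one_im, one_div, Complex.inv_im]; ring
  rw [h1]
  exact ne_of_gt (div_pos h hN)

lemma one_sub_ne_zero_of_im_pos {z : ℂ} (h : 0 < z.im) : (1 : ℂ) - z ≠ 0 := by
  intro hc
  have : (1 : ℂ) = z := sub_eq_zero.mp hc
  rw [← this] at h; simp at h

lemma neg_div_one_sub_mem_Ccut {z : ℂ} (h : 0 < z.im) : -z / (1 - z) ∈ Ccut := by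
  apply mem_Ccut_of_im_ne
  have hN : 0 < Complex.normSq (1 - z) :=
    Complex.normSq_pos.mpr (one_sub_ne_zero_of_im_pos h)
  have h2 : (-z / (1 - z)).im = -z.im / Complex.normSq (1 - z) := by
    rw [Complex.div_im, div_sub_div_same]
    congr 1
    rw [Complex.neg_im, Complex.neg_re, Complex.sub_re, Complex.sub_im,
      Complex.one_re, Complex.one_im]
    ring
  rw [h2]
  exact ne_of_lt (div_neg_of_neg_of_pos (neg_lt_zero.mpr h) hN)

lemma inv_one_sub_mem_Ccut {z : ℂ} (h : 0 < z.im) : 1 / (1 - z) ∈ Ccut := by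
  apply mem_Ccut_of_im_ne
  have hN : 0 < Complex.normSq (1 - z) :=
    Complex.normSq_pos.mpr (one_sub_ne_zero_of_im_pos h)
  have h2 : (1 / (1 - z)).im = z.im / Complex.normSq (1 - z) := by
    rw [one_div, Complex.inv_im, Complex.sub_im, Complex.one_im]; ring
  rw [h2]
  exact ne_of_gt (div_pos h hN)

end

section Aux

lemma mk4_eq_of (x y : ℂ) (n : ℤ) (h : x = y + (n:ℂ) * ((4:ℂ) * (Real.pi:ℂ)^2)) :
    mk4 x = mk4 y := by
  rw [h, show ((n:ℂ)) * ((4:ℂ) * (Real.pi:ℂ)^2) = n • ((4:ℂ) * (Real.pi:ℂ)^2) from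
    (zsmul_eq_mul _ _).symm]
  rw [map_add, show mk4 (n • ((4:ℂ) * (Real.pi:ℂ)^2)) = 0 from
    (QuotientAddGroup.eq_zero_iff _).mpr
      (AddSubgroup.zsmul_mem _ (AddSubgroup.mem_zmultiples _) n), add_zero]

lemma L_brace (L : PreBloch →+ Mod4pi2)
    (hL : ∀ (z : CCutBar) (p q : ℤ), L (PB z p q) = mk4 (Lbar z p q))
    (w : CCutBar) (p : ℤ) :
    L (brace w p) = mk4 ((Real.pi : ℂ) * Complex.I * (w.log + 2 * Real.pi * Complex.I * p)) := by
  rw [brace, map_sub, hL, hL, ← map_sub]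
  congr 1
  simp only [Lbar]
  push_cast
  ring

lemma upperPt_log {w : ℂ} (h0 : w ≠ 0) (h1 : w ≠ 1) :
    (upperPt w).log = Complex.log w := by
  rw [upperPt]
  split_ifs with h h2
  · rfl
  · show Complex.log (w.re : ℂ) = Complex.log w
    have him : w.im = 0 := by
      by_contra him
      exact h (Or.inl him)
    congr 1
    exact Complex.ext rfl (by simp [him])
  · exfalso
    have him : w.im = 0 := by
      by_contra him
      exact h (Or.inl him)
    have hre : ¬(0 < w.re ∧ w.re < 1) := fun hc => h (Or.inr hc)
    push_neg at h2
    rcases lt_trichotomy w.re 0 with hlt | heq | hgt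
    · exact absurd hlt (not_lt.mpr h2.1)
    · exact h0 (Complex.ext heq him)
    · rcases lt_trichotomy w.re 1 with hlt1 | heq1 | hgt1
      · exact hre ⟨hgt, hlt1⟩
      · exact h1 (Complex.ext heq1 him)
      · exact absurd hgt1 (not_lt.mpr h2.2)

lemma log_sq_exists (z : ℂ) (hz : z ≠ 0) :
    ∃ n : ℤ, Complex.log (z ^ 2) = 2 * Complex.log z + n * (2 * Real.pi * Complex.I) := by
  apply Complex.exp_eq_exp_iff_exists_int.mp
  rw [Complex.exp_log (pow_ne_zero 2 hz),
    show (2:ℂ) * Complex.log z = Complex.log z + Complex.log z by ring,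
    Complex.exp_add, Complex.exp_log hz]
  ring

lemma im_of_log_sq (z : ℂ) (n : ℤ)
    (hn : Complex.log (z ^ 2) = 2 * Complex.log z + n * (2 * Real.pi * Complex.I)) :
    Complex.arg (z ^ 2) = 2 * Complex.arg z + n * (2 * Real.pi) := by
  have := congrArg Complex.im hn
  simpa [Complex.log_im, Complex.add_im, Complex.mul_im, Complex.mul_re] using this

lemma log_sq_1 {z : ℂ} (hz : z ≠ 0)
    (h : -Real.pi / 2 < Complex.arg z ∧ Complex.arg z ≤ Real.pi / 2) :
    Complex.log (z ^ 2) = 2 * Complex.log z := by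
  obtain ⟨n, hn⟩ := log_sq_exists z hz
  have harg := im_of_log_sq z n hn
  have hpi : 0 < Real.pi := Real.pi_pos
  have hub := Complex.arg_le_pi (z ^ 2)
  have hlb := Complex.neg_pi_lt_arg (z ^ 2)
  have hn0 : n = 0 := by
    have h1 : (-1 : ℝ) < n := by nlinarith [h.1, h.2]
    have h2 : (n : ℝ) < 1 := by nlinarith [h.1, h.2]
    have : (-1:ℤ) < n ∧ n < 1 := by exact_mod_cast And.intro h1 h2
    omega
  rw [hn, hn0]
  push_cast
  ring

lemma log_sq_2 {z : ℂ} (hz : z ≠ 0) (h : Real.pi / 2 < Complex.arg z) :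
    Complex.log (z ^ 2) = 2 * Complex.log z - 2 * Real.pi * Complex.I := by
  obtain ⟨n, hn⟩ := log_sq_exists z hz
  have harg := im_of_log_sq z n hn
  have hpi : 0 < Real.pi := Real.pi_pos
  have hub := Complex.arg_le_pi (z ^ 2)
  have hlb := Complex.neg_pi_lt_arg (z ^ 2)
  have hza := Complex.arg_le_pi z
  have hn0 : n = -1 := by
    have h1 : (-2 : ℝ) < n := by nlinarith
    have h2 : (n : ℝ) < 0 := by nlinarith
    have : (-2:ℤ) < n ∧ n < 0 := by exact_mod_cast And.intro h1 h2
    omega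
  rw [hn, hn0]
  push_cast
  ring

lemma log_sq_3 {z : ℂ} (hz : z ≠ 0) (h : Complex.arg z ≤ -Real.pi / 2) :
    Complex.log (z ^ 2) = 2 * Complex.log z + 2 * Real.pi * Complex.I := by
  obtain ⟨n, hn⟩ := log_sq_exists z hz
  have harg := im_of_log_sq z n hn
  have hpi : 0 < Real.pi := Real.pi_pos
  have hub := Complex.arg_le_pi (z ^ 2)
  have hlb := Complex.neg_pi_lt_arg (z ^ 2)
  have hza := Complex.neg_pi_lt_arg z
  have hn0 : n = 1 := by
    have h1 : (0 : ℝ) < n := by nlinarith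
    have h2 : (n : ℝ) < 2 := by nlinarith
    have : (0:ℤ) < n ∧ n < 2 := by exact_mod_cast And.intro h1 h2
    omega
  rw [hn, hn0]
  push_cast
  ring

end Aux

/-- `L̂(χ̂(z)) = 2πi·Log z` in `ℂ/4π²ℤ` for every `z ∈ ℂ^×`. -/
theorem Lhat_chiHat (L : PreBloch →+ Mod4pi2)
    (hL : ∀ (z : CCutBar) (p q : ℤ), L (PB z p q) = mk4 (Lbar z p q))
    (z : ℂ) (hz : z ≠ 0) :
    L (chiHat z) = mk4 (2 * Real.pi * Complex.I * Complex.log z) := by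
  by_cases h1 : z = 1
  · subst h1
    rw [chiHat, if_pos rfl, Complex.log_one, map_zero, mul_zero, map_zero]
  by_cases hm1 : z = -1
  · subst hm1
    rw [chiHat, if_neg h1, if_pos rfl, kappaHat, map_sub,
      L_brace L hL, L_brace L hL, ← map_sub, Complex.log_neg_one]
    congr 1
    push_cast
    ring
  have hz2 : z ^ 2 ≠ 0 := pow_ne_zero 2 hz
  have hz21 : z ^ 2 ≠ 1 := by
    intro hc
    have : (z - 1) * (z + 1) = 0 := by linear_combination hc
    rcases mul_eq_zero.mp this with h | h
    · exact h1 (sub_eq_zero.mp h)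
    · exact hm1 (eq_neg_of_add_eq_zero_left h)
  rw [chiHat, if_neg h1, if_neg hm1]
  by_cases harg : -Real.pi / 2 < Complex.arg z ∧ Complex.arg z ≤ Real.pi / 2
  · rw [if_pos harg, L_brace L hL]
    congr 1
    rw [upperPt_log hz2 hz21, log_sq_1 hz harg]
    push_cast
    ring
  · rw [if_neg harg, L_brace L hL]
    rw [upperPt_log hz2 hz21]
    push_neg at harg
    by_cases hup : Real.pi / 2 < Complex.arg z
    · rw [log_sq_2 hz hup]
      congr 1
      push_cast
      ring
    · push_neg at hup
      have hdn : Complex.arg z ≤ -Real.pi / 2 := by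
        by_contra hc
        push_neg at hc
        exact absurd (harg hc) (not_lt.mpr hup)
      rw [log_sq_3 hz hdn]
      apply mk4_eq_of _ _ (-1)
      push_cast
      linear_combination (4:ℂ) * (Real.pi:ℂ)^2 * Complex.I_sq
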